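/- arXiv:math/0007206 — 3 statements merged into one kernel-verified Lean document; each statement's English description precedes it below -/
import Mathlib

section
/- Along any differentiable solution of the Euler–Poisson equations of the toy top (i.e. curves ω, r with m′ = ω×m + DL and r′ = ω×r), the quantity n := ⟨m, r⟩ is a first integral: its time derivative vanishes identically, so n is constant. -/
open scoped RealInnerProductSpace

/-- Cross product on `EuclideanSpace ℝ (Fin 3)`. -/
noncomputable def cross3 (x y : EuclideanSpace ℝ (Fin 3)) : EuclideanSpace ℝ (Fin 3) :=
  WithLp.toLp 2 ![x 1 * y 2 - x 2 * y 1, x 2 * y 0 - x 0 * y 2, x 0 * y 1 - x 1 * y 0]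

/-- The vertical unit vector `k = (0,0,1)`. -/
noncomputable def kvec : EuclideanSpace ℝ (Fin 3) := WithLp.toLp 2 ![0, 0, 1]

/-! Differentiating `n = ⟨m, r⟩` gives `⟨ω × m + DL, r⟩ + ⟨m, ω × r⟩`. The map `x ↦ ω × x` is
skew-adjoint, so `⟨ω × m, r⟩ + ⟨m, ω × r⟩ = 0`, and every term of `DL` is a cross product
`r × v`, hence orthogonal to `r`. So `n' = 0` and `n` is constant. -/

local notation "ℝ³" => EuclideanSpace ℝ (Fin 3)

theorem inner_cross3_eq (x y z : ℝ³) :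
    ⟪cross3 x y, z⟫ = (x 1 * y 2 - x 2 * y 1) * z 0 + (x 2 * y 0 - x 0 * y 2) * z 1
      + (x 0 * y 1 - x 1 * y 0) * z 2 := by
  simp only [cross3, PiLp.inner_apply, RCLike.inner_apply, conj_trivial, Fin.sum_univ_three,
    Matrix.cons_val_zero, Matrix.cons_val_one, Matrix.cons_val_two,
    Matrix.head_cons, Matrix.tail_cons]
  ring

theorem inner_cross3_self_left (x y : ℝ³) : ⟪cross3 x y, x⟫ = 0 := by
  rw [inner_cross3_eq]
  ring

theorem inner_cross3_add_inner_cross3_eq_zero (w x y : ℝ³) :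
    ⟪cross3 w x, y⟫ + ⟪x, cross3 w y⟫ = 0 := by
  rw [real_inner_comm (cross3 w y) x, inner_cross3_eq, inner_cross3_eq]
  ring

theorem deriv_inner_eq_zero_of_rotating {m r ω D : ℝ → ℝ³} {t : ℝ}
    (hm : DifferentiableAt ℝ m t) (hr : DifferentiableAt ℝ r t)
    (hm' : deriv m t = cross3 (ω t) (m t) + D t) (hr' : deriv r t = cross3 (ω t) (r t))
    (hD : ⟪D t, r t⟫ = 0) :
    deriv (fun t => ⟪m t, r t⟫) t = 0 := by
  rw [(hm.hasDerivAt.inner ℝ hr.hasDerivAt).deriv, hm', hr', inner_add_left, hD, add_zero,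
    add_comm, inner_cross3_add_inner_cross3_eq_zero]

theorem toyTop_n_first_integral_general
    (A C p s : ℝ)
    (ω r : ℝ → EuclideanSpace ℝ (Fin 3))
    (hr : Differentiable ℝ r)
    (m DL : ℝ → EuclideanSpace ℝ (Fin 3))
    (hDL : ∀ t, DL t = ((C - A) * ⟪ω t, r t⟫) • cross3 (r t) (ω t)
        + (p * s * ⟪cross3 (r t) kvec, ω t⟫) • cross3 (r t) (cross3 kvec (ω t))
        + p • cross3 (r t) kvec)
    (hmdiff : Differentiable ℝ m)
    (heqm : ∀ t, deriv m t = cross3 (ω t) (m t) + DL t)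
    (heqr : ∀ t, deriv r t = cross3 (ω t) (r t)) :
    (∀ t, deriv (fun t => ⟪m t, r t⟫) t = 0) ∧
      ∀ t₁ t₂, ⟪m t₁, r t₁⟫ = ⟪m t₂, r t₂⟫ := by
  have hDL_perp (t : ℝ) : ⟪DL t, r t⟫ = 0 := by
    simp only [hDL t, inner_add_left, real_inner_smul_left, inner_cross3_self_left, mul_zero,
      add_zero]
  have hderiv (t : ℝ) : deriv (fun t => ⟪m t, r t⟫) t = 0 :=
    deriv_inner_eq_zero_of_rotating (hmdiff t) (hr t) (heqm t) (heqr t) (hDL_perp t)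
  exact ⟨hderiv, is_const_of_deriv_eq_zero (hmdiff.inner ℝ hr) hderiv⟩

/-- Along any solution of the Euler–Poisson equations of the toy top, the quantity
`n = ⟨m, r⟩` is a first integral: its derivative vanishes identically, hence it is constant. -/
theorem toyTop_n_first_integral
    (A C p s : ℝ) (hA : 0 < A) (hC : 0 < C) (hp : 0 < p) (hs : 0 < s)
    (ω r : ℝ → EuclideanSpace ℝ (Fin 3))
    (hω : Differentiable ℝ ω) (hr : Differentiable ℝ r)
    (hrnorm : ∀ t, ‖r t‖ = 1)
    (m DL : ℝ → EuclideanSpace ℝ (Fin 3))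
    (hm : ∀ t, m t = A • ω t + ((C - A) * ⟪ω t, r t⟫) • r t
        + (p * s * ⟪cross3 (r t) kvec, ω t⟫) • cross3 (r t) kvec)
    (hDL : ∀ t, DL t = ((C - A) * ⟪ω t, r t⟫) • cross3 (r t) (ω t)
        + (p * s * ⟪cross3 (r t) kvec, ω t⟫) • cross3 (r t) (cross3 kvec (ω t))
        + p • cross3 (r t) kvec)
    (hmdiff : Differentiable ℝ m)
    (heqm : ∀ t, deriv m t = cross3 (ω t) (m t) + DL t)
    (heqr : ∀ t, deriv r t = cross3 (ω t) (r t)) :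
    (∀ t, deriv (fun t => ⟪m t, r t⟫) t = 0) ∧
      ∀ t₁ t₂, ⟪m t₁, r t₁⟫ = ⟪m t₂, r t₂⟫ :=
  toyTop_n_first_integral_general A C p s ω r hr m DL hDL hmdiff heqm heqr
end

section
/- Reduced equation of motion of the toy top (pointwise form): under the stated definitions, if u² ≠ 1 then (s/2)·(A/(ps) + 1 − u²)·ν² = (1/p)·(1 − u²)·(h − n²/(2C) − p·u) − (1/(2Ap))·(l − n·u)². -/
open scoped RealInnerProductSpace

/-!
Subtracting the spin energy `n² / (2C)` and the potential `p u` from `h` leaves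
`A / 2 (‖ω‖² - ⟨ω,r⟩²) + p s / 2 · ν²`, and `l - n u = A (⟨ω,k⟩ - u ⟨ω,r⟩)`. For unit vectors
`r, k` the squared triple product `ν²` is the Gram determinant of `ω, r, k`, namely
`(1 - u²)(‖ω‖² - ⟨ω,r⟩²) - (⟨ω,k⟩ - u ⟨ω,r⟩)²`, and this turns the right-hand side into the left.
-/

theorem inner_cross3_sq (x y z : EuclideanSpace ℝ (Fin 3)) :
    ⟪x, cross3 y z⟫ ^ 2
      = ⟪x, x⟫ * ⟪y, y⟫ * ⟪z, z⟫ + 2 * ⟪x, y⟫ * ⟪y, z⟫ * ⟪z, x⟫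
        - ⟪x, x⟫ * ⟪y, z⟫ ^ 2 - ⟪y, y⟫ * ⟪z, x⟫ ^ 2 - ⟪z, z⟫ * ⟪x, y⟫ ^ 2 := by
  simp only [cross3, PiLp.inner_apply, RCLike.inner_apply, conj_trivial, Fin.sum_univ_three,
    Matrix.cons_val_zero, Matrix.cons_val_one, Matrix.cons_val_two, Matrix.head_cons,
    Matrix.tail_cons]
  ring

theorem inner_cross3_sq_of_norm_eq_one {r k : EuclideanSpace ℝ (Fin 3)} (hr : ‖r‖ = 1)
    (hk : ‖k‖ = 1) (ω : EuclideanSpace ℝ (Fin 3)) :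
    ⟪ω, cross3 r k⟫ ^ 2
      = (1 - ⟪r, k⟫ ^ 2) * (⟪ω, ω⟫ - ⟪ω, r⟫ ^ 2) - (⟪ω, k⟫ - ⟪r, k⟫ * ⟪ω, r⟫) ^ 2 := by
  have hrr : ⟪r, r⟫ = 1 := by simp [hr]
  have hkk : ⟪k, k⟫ = 1 := by simp [hk]
  rw [inner_cross3_sq, hrr, hkk, real_inner_comm k ω, real_inner_comm r ω]
  ring

/-- No `a ≠ 0` is needed: for `a = 0` both sides vanish since `x / 0 = 0`. -/
theorem mul_sq_div_mul_self {K : Type*} [Field K] (a b c : K) :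
    (a * b) ^ 2 / (c * a) = a * b ^ 2 / c := by
  calc (a * b) ^ 2 / (c * a) = a * a / a * b ^ 2 / c := by ring
    _ = a * b ^ 2 / c := by rw [mul_self_div_self]

theorem toyTop_reduced_equation_general
    (A C p s : ℝ) (hp : 0 < p) (hs : 0 < s)
    (ω r k : EuclideanSpace ℝ (Fin 3)) (hr : ‖r‖ = 1) (hk : ‖k‖ = 1)
    (u n l ν T V h : ℝ)
    (hu : u = ⟪r, k⟫)
    (hn : n = C * ⟪ω, r⟫)
    (hl : l = A * ⟪ω, k⟫ + (C - A) * ⟪ω, r⟫ * u)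
    (hν : ν = ⟪ω, cross3 r k⟫)
    (hT : T = A / 2 * ⟪ω, ω⟫ + (C - A) / 2 * ⟪ω, r⟫ ^ 2 + p * s / 2 * ⟪cross3 r k, ω⟫ ^ 2)
    (hV : V = p * u)
    (hh : h = T + V) :
    s / 2 * (A / (p * s) + 1 - u ^ 2) * ν ^ 2
      = 1 / p * (1 - u ^ 2) * (h - n ^ 2 / (2 * C) - p * u)
        - 1 / (2 * A * p) * (l - n * u) ^ 2 := by
  have hspin : n ^ 2 / (2 * C) = C / 2 * ⟪ω, r⟫ ^ 2 := by
    rw [hn, mul_sq_div_mul_self]; ring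
  have hl_sub : l - n * u = A * (⟪ω, k⟫ - u * ⟪ω, r⟫) := by
    rw [hl, hn]; ring
  have hangular :
      1 / (2 * A * p) * (l - n * u) ^ 2 = A * (⟪ω, k⟫ - u * ⟪ω, r⟫) ^ 2 / (2 * p) := by
    rw [hl_sub, one_div_mul_eq_div, mul_right_comm, mul_sq_div_mul_self]
  have hgram : ν ^ 2 = (1 - u ^ 2) * (⟪ω, ω⟫ - ⟪ω, r⟫ ^ 2) - (⟪ω, k⟫ - u * ⟪ω, r⟫) ^ 2 := by
    rw [hν, hu, inner_cross3_sq_of_norm_eq_one hr hk]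
  rw [hspin, hangular, hh, hT, hV, real_inner_comm ω (cross3 r k), ← hν]
  field_simp
  linear_combination A * hgram

/-- Reduced equation of motion of the toy top (pointwise form). -/
theorem toyTop_reduced_equation
    (A C p s : ℝ) (hA : 0 < A) (hC : 0 < C) (hp : 0 < p) (hs : 0 < s)
    (ω r k : EuclideanSpace ℝ (Fin 3)) (hr : ‖r‖ = 1) (hk : ‖k‖ = 1)
    (u n l ν T V h : ℝ)
    (hu : u = ⟪r, k⟫)
    (hn : n = C * ⟪ω, r⟫)
    (hl : l = A * ⟪ω, k⟫ + (C - A) * ⟪ω, r⟫ * u)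
    (hν : ν = ⟪ω, cross3 r k⟫)
    (hT : T = A / 2 * ⟪ω, ω⟫ + (C - A) / 2 * ⟪ω, r⟫ ^ 2 + p * s / 2 * ⟪cross3 r k, ω⟫ ^ 2)
    (hV : V = p * u)
    (hh : h = T + V)
    (hu2 : u ^ 2 ≠ 1) :
    s / 2 * (A / (p * s) + 1 - u ^ 2) * ν ^ 2
      = 1 / p * (1 - u ^ 2) * (h - n ^ 2 / (2 * C) - p * u)
        - 1 / (2 * A * p) * (l - n * u) ^ 2 :=
  toyTop_reduced_equation_general A C p s hp hs ω r k hr hk u n l ν T V h hu hn hl hν hT hV hh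
end

section
/- Representation of the angular velocity in the frame (r, k, r×k): under the stated definitions, if u² ≠ 1 then (1 − u²)·ω = (C⁻¹(1 − u²)n − A⁻¹(l − n·u)·u)·r + A⁻¹(l − n·u)·k + ν·(r×k). -/
open scoped RealInnerProductSpace

/-!
Multiplying `ω` by the Gram determinant `‖a‖²‖b‖² - ⟪a, b⟫² = ‖a × b‖²` clears the denominators
of its expansion in the frame `(a, b, a × b)`, leaving a polynomial identity in the coordinates.
For unit `r, k` the determinant is `1 - u²`, and substituting `n` and `l` turns the stated
coefficients of `r` and `k` into `⟪ω, r⟫ - u⟪ω, k⟫` and `⟪ω, k⟫ - u⟪ω, r⟫`.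
-/

theorem gram_smul_eq_cross3_frame (ω a b : EuclideanSpace ℝ (Fin 3)) :
    (⟪a, a⟫ * ⟪b, b⟫ - ⟪a, b⟫ ^ 2) • ω
      = (⟪ω, a⟫ * ⟪b, b⟫ - ⟪ω, b⟫ * ⟪a, b⟫) • a + (⟪ω, b⟫ * ⟪a, a⟫ - ⟪ω, a⟫ * ⟪a, b⟫) • b
        + ⟪ω, cross3 a b⟫ • cross3 a b := by
  ext i
  fin_cases i <;>
    simp only [cross3, PiLp.inner_apply, RCLike.inner_apply, conj_trivial, Fin.sum_univ_three,
      PiLp.add_apply, PiLp.smul_apply, smul_eq_mul, Fin.zero_eta, Fin.mk_one,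
      Fin.reduceFinMk, Matrix.cons_val] <;> ring

theorem one_sub_inner_sq_smul_eq_cross3_frame (ω r k : EuclideanSpace ℝ (Fin 3))
    (hr : ‖r‖ = 1) (hk : ‖k‖ = 1) :
    (1 - ⟪r, k⟫ ^ 2) • ω
      = (⟪ω, r⟫ - ⟪ω, k⟫ * ⟪r, k⟫) • r + (⟪ω, k⟫ - ⟪ω, r⟫ * ⟪r, k⟫) • k
        + ⟪ω, cross3 r k⟫ • cross3 r k := by
  simpa [hr, hk] using gram_smul_eq_cross3_frame ω r k

theorem toyTop_omega_representation_general
    (A C : ℝ) (hA : 0 < A) (hC : 0 < C)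
    (ω r k : EuclideanSpace ℝ (Fin 3)) (hr : ‖r‖ = 1) (hk : ‖k‖ = 1)
    (u n l ν : ℝ)
    (hu : u = ⟪r, k⟫)
    (hn : n = C * ⟪ω, r⟫)
    (hl : l = A * ⟪ω, k⟫ + (C - A) * ⟪ω, r⟫ * u)
    (hν : ν = ⟪ω, cross3 r k⟫) :
    (1 - u ^ 2) • ω
      = (C⁻¹ * (1 - u ^ 2) * n - A⁻¹ * (l - n * u) * u) • r
        + (A⁻¹ * (l - n * u)) • k + ν • cross3 r k := by
  have hk_coeff : A⁻¹ * (l - n * u) = ⟪ω, k⟫ - ⟪ω, r⟫ * u := by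
    rw [hl, hn]; field_simp; ring
  have hr_coeff : C⁻¹ * (1 - u ^ 2) * n - A⁻¹ * (l - n * u) * u = ⟪ω, r⟫ - ⟪ω, k⟫ * u := by
    rw [hk_coeff, hn]; field_simp; ring
  rw [hr_coeff, hk_coeff, hu, hν]
  exact one_sub_inner_sq_smul_eq_cross3_frame ω r k hr hk

/-- Representation of the angular velocity in the frame `(r, k, r×k)`. -/
theorem toyTop_omega_representation
    (A C : ℝ) (hA : 0 < A) (hC : 0 < C)
    (ω r k : EuclideanSpace ℝ (Fin 3)) (hr : ‖r‖ = 1) (hk : ‖k‖ = 1)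
    (u n l ν : ℝ)
    (hu : u = ⟪r, k⟫)
    (hn : n = C * ⟪ω, r⟫)
    (hl : l = A * ⟪ω, k⟫ + (C - A) * ⟪ω, r⟫ * u)
    (hν : ν = ⟪ω, cross3 r k⟫)
    (hu2 : u ^ 2 ≠ 1) :
    (1 - u ^ 2) • ω
      = (C⁻¹ * (1 - u ^ 2) * n - A⁻¹ * (l - n * u) * u) • r
        + (A⁻¹ * (l - n * u)) • k + ν • cross3 r k :=
  toyTop_omega_representation_general A C hA hC ω r k hr hk u n l ν hu hn hl hν
end
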